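/- If psol(A,B) = {x} and Ax is a singleton, then dsol(A,B) = Ax. -/

import Mathlib

open Pointwise InnerProductSpace

variable {X : Type*} [NormedAddCommGroup X] [InnerProductSpace ℝ X]

/-- A set-valued operator `A : X ⇉ X` is monotone. -/
def SVMonotone (A : X → Set X) : Prop :=
  ∀ ⦃x y u v : X⦄, u ∈ A x → v ∈ A y → 0 ≤ ⟪x - y, u - v⟫_ℝ

/-- A set-valued operator is maximally monotone. -/
def SVMaxMonotone (A : X → Set X) : Prop :=
  SVMonotone A ∧ ∀ x u : X, (∀ y v, v ∈ A y → 0 ≤ ⟪x - y, u - v⟫_ℝ) → u ∈ A x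

/-- Set-valued inverse. -/
def SVInv (A : X → Set X) : X → Set X := fun u => {x | u ∈ A x}

/-- `B^∨ = (−Id) ∘ B ∘ (−Id)`. -/
def SVVee (B : X → Set X) : X → Set X := fun x => -(B (-x))

/-- `B^{−∨} = (B⁻¹)^∨`. -/
def SVInvVee (B : X → Set X) : X → Set X := SVVee (SVInv B)

/-- Primal Attouch–Théra solutions: `zer (A + B)`. -/
def psol (A B : X → Set X) : Set X := {x | (0 : X) ∈ A x + B x}

/-- Dual Attouch–Théra solutions: `zer (A⁻¹ + B^{−∨})`. -/
def dsol (A B : X → Set X) : Set X := {y | (0 : X) ∈ SVInv A y + SVInvVee B y}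

/-! Both solution sets are governed by the sets `A x ∩ -B x`: `x` is a primal solution exactly
when this set is nonempty, and the dual solutions are its elements as `x` ranges over all points.
So a unique primal solution `x` leaves `A x ∩ -B x` as the whole dual set, and it equals `A x`
when `A x` is a singleton. -/

theorem Set.zero_mem_add_iff_inter_neg_nonempty {G : Type*} [AddGroup G] {s t : Set G} :
    (0 : G) ∈ s + t ↔ (s ∩ -t).Nonempty := by
  simp only [Set.mem_add, Set.Nonempty, Set.mem_inter_iff, Set.mem_neg, add_eq_zero_iff_eq_neg]
  constructor
  · rintro ⟨a, ha, b, hb, rfl⟩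
    exact ⟨-b, ha, by rwa [neg_neg]⟩
  · rintro ⟨a, ha, hb⟩
    exact ⟨a, ha, -a, hb, (neg_neg a).symm⟩

section AttouchThera

variable {E : Type*} [NormedAddCommGroup E] (A B : E → Set E)

theorem mem_psol_iff {x : E} : x ∈ psol A B ↔ (A x ∩ -B x).Nonempty :=
  Set.zero_mem_add_iff_inter_neg_nonempty

theorem mem_dsol_iff {y : E} : y ∈ dsol A B ↔ ∃ x, y ∈ A x ∩ -B x := by
  simp only [dsol, SVInvVee, SVVee, SVInv, Set.mem_ofPred_eq,
    Set.zero_mem_add_iff_inter_neg_nonempty, neg_neg, Set.Nonempty, Set.mem_inter_iff,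
    Set.mem_neg]

theorem dsol_eq_inter_of_psol_eq_singleton {x : E} (hx : psol A B = {x}) :
    dsol A B = A x ∩ -B x := by
  ext y
  refine ⟨fun hy => ?_, fun hy => (mem_dsol_iff A B).2 ⟨x, hy⟩⟩
  obtain ⟨u, hu⟩ := (mem_dsol_iff A B).1 hy
  have hux : u ∈ psol A B := (mem_psol_iff A B).2 ⟨y, hu⟩
  rw [hx, Set.mem_singleton_iff] at hux
  rwa [hux] at hu

end AttouchThera

theorem dsol_eq_Ax_general (A B : X → Set X) (x : X)
    (hx : psol A B = {x}) (hsingle : ∃ a : X, A x = {a}) :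
    dsol A B = A x := by
  obtain ⟨a, ha⟩ := hsingle
  have hx_mem : x ∈ psol A B := hx ▸ rfl
  rw [mem_psol_iff, ha, Set.singleton_inter_nonempty] at hx_mem
  rw [dsol_eq_inter_of_psol_eq_singleton A B hx, ha, Set.singleton_inter_of_mem hx_mem]

/-- If `psol (A, B) = {x}` and `A x` is a singleton, then `dsol (A, B) = A x`. -/
theorem dsol_eq_Ax (A B : X → Set X)
    (hA : SVMaxMonotone A) (hB : SVMaxMonotone B) (x : X)
    (hx : psol A B = {x}) (hsingle : ∃ a : X, A x = {a}) :
    dsol A B = A x :=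
  dsol_eq_Ax_general A B x hx hsingle
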